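/- Let a ∈ (0,1) and let β lie in the open interval (−a/√(1−a²), a/√(1−a²)). Set z = √((1−a²)(1+β²)), so z ∈ [√(1−a²), 1). Then F₁ is differentiable at β and F₁'(β) = (z − √(1−z²)·arcsin z) / ((1+β²)^{3/2}·√(1−z²)). -/

import Mathlib

open Real Set

/-- The argument function `F₁(β)` in the short-time case. -/
noncomputable def F₁ (a β : ℝ) : ℝ :=
  -(β / Real.sqrt (1 + β^2)) * Real.arcsin (Real.sqrt ((1 - a^2) * (1 + β^2))) +
    Real.arcsin (β * Real.sqrt (1 - a^2) / a)

/-! Write `c = √(1 - a²)` and `S = √(1 + β²)`, so that `z = c S` and `1 - z² = a² - c² β²`.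
Then `β / S` has derivative `S⁻³`, `z` has derivative `c² β / z`, and the second arcsin has
derivative `c / √(1 - z²)`. The two terms carrying `1 / √(1 - z²)` add up to
`(c - z β² / S³) / √(1 - z²) = z / (S³ √(1 - z²))`, because `c = z S² / S³`. -/

theorem HasDerivAt.arcsin {f : ℝ → ℝ} {f' x : ℝ} (hf : HasDerivAt f f' x) (h : f x ^ 2 < 1) :
    HasDerivAt (fun y => arcsin (f y)) (f' / √(1 - f x ^ 2)) x := by
  obtain ⟨h₁, h₂⟩ := abs_lt.1 ((sq_lt_one_iff_abs_lt_one _).1 h)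
  exact ((hasDerivAt_arcsin h₁.ne' h₂.ne).comp x hf).congr_deriv (by ring)

theorem hasDerivAt_sqrt_mul_one_add_sq {k : ℝ} (hk : k ≠ 0) (x : ℝ) :
    HasDerivAt (fun y => √(k * (1 + y ^ 2))) (k * x / √(k * (1 + x ^ 2))) x :=
  ((((hasDerivAt_pow 2 x).const_add 1).const_mul k).sqrt
    (mul_ne_zero hk (by positivity))).congr_deriv (by ring)

theorem hasDerivAt_div_sqrt_one_add_sq (x : ℝ) :
    HasDerivAt (fun y => y / √(1 + y ^ 2)) (1 / √(1 + x ^ 2) ^ 3) x := by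
  have hS := hasDerivAt_sqrt_mul_one_add_sq one_ne_zero x
  simp only [one_mul] at hS
  have hpos : 0 < √(1 + x ^ 2) := by positivity
  refine ((hasDerivAt_id' x).div hS hpos.ne').congr_deriv ?_
  field_simp
  rw [sq_sqrt (by positivity)]
  ring

theorem sq_mul_div_lt_one_of_mem_Ioo {a c β : ℝ} (ha : 0 < a) (hc : 0 < c)
    (hβ : β ∈ Ioo (-(a / c)) (a / c)) : (β * c / a) ^ 2 < 1 := by
  obtain ⟨hβ₁, hβ₂⟩ := hβ
  rw [neg_div', div_lt_iff₀ hc] at hβ₁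
  rw [lt_div_iff₀ hc] at hβ₂
  rw [sq_lt_one_iff_abs_lt_one, abs_lt, lt_div_iff₀ ha, div_lt_iff₀ ha]
  constructor <;> linarith

/-- Derivative formula for `F₁` in the interior of its domain. -/
theorem F₁_hasDerivAt (a β z : ℝ) (ha : a ∈ Set.Ioo (0:ℝ) 1)
    (hβ : β ∈ Set.Ioo (-(a / Real.sqrt (1 - a^2))) (a / Real.sqrt (1 - a^2)))
    (hz : z = Real.sqrt ((1 - a^2) * (1 + β^2))) :
    z ∈ Set.Ico (Real.sqrt (1 - a^2)) 1 ∧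
    HasDerivAt (F₁ a)
      ((z - Real.sqrt (1 - z^2) * Real.arcsin z) /
        ((1 + β^2) ^ ((3:ℝ)/2) * Real.sqrt (1 - z^2))) β := by
  obtain ⟨ha0, ha1⟩ := ha
  have hk : 0 < 1 - a ^ 2 := by nlinarith
  have hu := sq_mul_div_lt_one_of_mem_Ioo ha0 (sqrt_pos.2 hk) hβ
  have hz2 : 1 - (β * √(1 - a ^ 2) / a) ^ 2 = (1 - z ^ 2) / a ^ 2 := by
    rw [hz, sq_sqrt (by positivity), div_pow, mul_pow, sq_sqrt hk.le]
    field_simp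
    ring
  have hQ : 0 < 1 - z ^ 2 := (div_pos_iff_of_pos_right (by positivity)).1 (hz2 ▸ sub_pos.2 hu)
  have hz0 : 0 ≤ z := hz ▸ sqrt_nonneg _
  refine ⟨⟨hz ▸ sqrt_le_sqrt (by nlinarith), (sq_lt_one_iff₀ hz0).1 (by linarith)⟩, ?_⟩
  have hd : HasDerivAt (F₁ a) _ β := ((hasDerivAt_div_sqrt_one_add_sq β).neg.mul
    ((hasDerivAt_sqrt_mul_one_add_sq hk.ne' β).arcsin (hz ▸ by linarith))).add
    (((hasDerivAt_mul_const √(1 - a ^ 2)).div_const a).arcsin hu)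
  refine hd.congr_deriv ?_
  have hzcS : z = √(1 - a ^ 2) * √(1 + β ^ 2) := by rw [hz, sqrt_mul hk.le]
  have : 0 < z := hzcS ▸ by positivity
  have : 0 < √(1 - z ^ 2) := sqrt_pos.2 hQ
  rw [← hz, hz2, sqrt_div hQ.le, sqrt_sq ha0.le, rpow_div_two_eq_sqrt 3 (by positivity),
    rpow_ofNat, Pi.neg_apply]
  field_simp
  linear_combination
    (√(1 + β ^ 2) ^ 3 * √(1 - a ^ 2) - z - √(1 - a ^ 2) * √(1 + β ^ 2)) * hzcS +
    √(1 + β ^ 2) ^ 2 * (√(1 + β ^ 2) ^ 2 - 1) * sq_sqrt hk.le +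
    √(1 + β ^ 2) ^ 2 * (1 - a ^ 2) * sq_sqrt (by positivity : (0:ℝ) ≤ 1 + β ^ 2)
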